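/- If X and Y are two bases of the free group F_n, then the Jacobian matrix ∂Y/∂X = (∂Y_j/∂X_i)_{j,i} is invertible over ℤF_n, with inverse ∂X/∂Y. -/

import Mathlib

/-!
A Fox derivation is determined by its values on a generating set, which gives the chain rule
`D W = Σ_i ∂W/∂X_i · D X_i` for every Fox derivation `D`. Taking `D = ∂/∂Y_j` and `W = Y_k` yields
`δ_kj = Σ_i ∂Y_k/∂X_i · ∂X_i/∂Y_j`, i.e. `∂Y/∂X · ∂X/∂Y = 1`; the other product is symmetric.
-/

open Subgroup

variable {k G : Type*} [Ring k] [Group G]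

/-- The restriction to `G` of a Fox derivative: a crossed homomorphism `G → k[G]` for the
left multiplication action. -/
def IsFoxDerivation (D : G → MonoidAlgebra k G) : Prop :=
  ∀ U V, D (U * V) = D U + MonoidAlgebra.of k G U * D V

namespace IsFoxDerivation

variable {D E : G → MonoidAlgebra k G}

theorem map_one (hD : IsFoxDerivation D) : D 1 = 0 := by
  have h := hD 1 1
  rw [mul_one, _root_.map_one, one_mul] at h
  exact left_eq_add.mp h

theorem map_inv (hD : IsFoxDerivation D) (U : G) :
    D U⁻¹ = -(MonoidAlgebra.of k G U⁻¹ * D U) := by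
  have h := hD U⁻¹ U
  rw [inv_mul_cancel, hD.map_one] at h
  exact eq_neg_of_add_eq_zero_left h.symm

theorem mul_const (hD : IsFoxDerivation D) (r : MonoidAlgebra k G) :
    IsFoxDerivation fun U ↦ D U * r := by
  intro U V
  simp only [hD U V, add_mul, mul_assoc]

theorem sum {ι : Type*} (s : Finset ι) {D : ι → G → MonoidAlgebra k G}
    (hD : ∀ i ∈ s, IsFoxDerivation (D i)) : IsFoxDerivation fun U ↦ ∑ i ∈ s, D i U := by
  intro U V
  rw [Finset.mul_sum, ← Finset.sum_add_distrib]
  exact Finset.sum_congr rfl fun i hi ↦ hD i hi U V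

theorem ext_of_closure_eq_top {s : Set G} (hs : closure s = ⊤) (hD : IsFoxDerivation D)
    (hE : IsFoxDerivation E) (h : Set.EqOn D E s) : D = E := by
  funext W
  induction (hs ▸ mem_top W : W ∈ closure s) using closure_induction with
  | mem x hx => exact h hx
  | one => rw [hD.map_one, hE.map_one]
  | mul x y _ _ hx hy => rw [hD, hE, hx, hy]
  | inv x _ hx => rw [hD.map_inv, hE.map_inv, hx]

theorem eq_sum_mul {ι : Type*} [Fintype ι] [DecidableEq ι] {b : ι → G}
    (hb : closure (Set.range b) = ⊤) {dB : ι → G → MonoidAlgebra k G}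
    (hdB : ∀ i, IsFoxDerivation (dB i)) (hdBb : ∀ i j, dB i (b j) = if j = i then 1 else 0)
    (hD : IsFoxDerivation D) (W : G) : D W = ∑ i, dB i W * D (b i) := by
  refine congrFun (ext_of_closure_eq_top hb hD
    (sum _ fun i _ ↦ (hdB i).mul_const (D (b i))) ?_) W
  rintro _ ⟨j, rfl⟩
  simp [hdBb]

end IsFoxDerivation

/-- The Jacobian matrix `∂c/∂X`, whose `(m, i)` entry is `∂c_m/∂X_i` for `d i = ∂/∂X_i`. -/
def foxJacobian {ι : Type*} (d : ι → G → MonoidAlgebra k G) (c : ι → G) :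
    Matrix ι ι (MonoidAlgebra k G) :=
  Matrix.of fun m i ↦ d i (c m)

theorem foxJacobian_mul_foxJacobian {ι : Type*} [Fintype ι] [DecidableEq ι] {b c : ι → G}
    (hb : closure (Set.range b) = ⊤) {dB dC : ι → G → MonoidAlgebra k G}
    (hdB : ∀ i, IsFoxDerivation (dB i)) (hdC : ∀ i, IsFoxDerivation (dC i))
    (hdBb : ∀ i j, dB i (b j) = if j = i then 1 else 0)
    (hdCc : ∀ i j, dC i (c j) = if j = i then 1 else 0) :
    foxJacobian dB c * foxJacobian dC b = 1 := by
  ext m j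
  rw [Matrix.mul_apply, Matrix.one_apply, ← hdCc j m, (hdC j).eq_sum_mul hb hdB hdBb]
  rfl

/-- **Invertibility of the Jacobian matrix of a change of basis.**
Let `X` be the standard basis of `F_n` and `Y` a second basis, given as the image of
`X` under an automorphism `e`.  Let `dX i`, `dY k` be ℤ-linear maps on `ℤF_n`
satisfying the defining properties of the Fox derivatives with respect to `X`,
resp. `Y`.  Then the Jacobian matrix `∂Y/∂X = (∂Y_k/∂X_i)_{k,i}` is invertible over
`ℤF_n`, with inverse the Jacobian matrix `∂X/∂Y = (∂X_k/∂Y_i)_{k,i}`. -/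
theorem fox_jacobian_invertible (n : ℕ)
    (e : FreeGroup (Fin n) ≃* FreeGroup (Fin n))
    (dX dY : Fin n →
      MonoidAlgebra ℤ (FreeGroup (Fin n)) →ₗ[ℤ] MonoidAlgebra ℤ (FreeGroup (Fin n)))
    (hXbasis : ∀ i j : Fin n,
      dX i (MonoidAlgebra.of ℤ (FreeGroup (Fin n)) (FreeGroup.of j)) = if j = i then 1 else 0)
    (hXprod : ∀ (i : Fin n) (U V : FreeGroup (Fin n)),
      dX i (MonoidAlgebra.of ℤ (FreeGroup (Fin n)) (U * V)) =
        dX i (MonoidAlgebra.of ℤ (FreeGroup (Fin n)) U) +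
          MonoidAlgebra.of ℤ (FreeGroup (Fin n)) U *
            dX i (MonoidAlgebra.of ℤ (FreeGroup (Fin n)) V))
    (hYbasis : ∀ k j : Fin n,
      dY k (MonoidAlgebra.of ℤ (FreeGroup (Fin n)) (e (FreeGroup.of j))) =
        if j = k then 1 else 0)
    (hYprod : ∀ (k : Fin n) (U V : FreeGroup (Fin n)),
      dY k (MonoidAlgebra.of ℤ (FreeGroup (Fin n)) (U * V)) =
        dY k (MonoidAlgebra.of ℤ (FreeGroup (Fin n)) U) +
          MonoidAlgebra.of ℤ (FreeGroup (Fin n)) U *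
            dY k (MonoidAlgebra.of ℤ (FreeGroup (Fin n)) V))
    (dYdX dXdY : Matrix (Fin n) (Fin n) (MonoidAlgebra ℤ (FreeGroup (Fin n))))
    (hdYdX : ∀ k i : Fin n,
      dYdX k i = dX i (MonoidAlgebra.of ℤ (FreeGroup (Fin n)) (e (FreeGroup.of k))))
    (hdXdY : ∀ k i : Fin n,
      dXdY k i = dY i (MonoidAlgebra.of ℤ (FreeGroup (Fin n)) (FreeGroup.of k))) :
    dYdX * dXdY = 1 ∧ dXdY * dYdX = 1 := by
  set ι := MonoidAlgebra.of ℤ (FreeGroup (Fin n))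
  have hX : closure (Set.range (FreeGroup.of : Fin n → FreeGroup (Fin n))) = ⊤ :=
    FreeGroup.closure_range_of _
  have hY : closure (Set.range (e ∘ FreeGroup.of)) = ⊤ := by
    rw [Set.range_comp, ← MonoidHom.coe_coe e, ← MonoidHom.map_closure, hX]
    exact map_top_of_surjective _ e.surjective
  have hJYX : dYdX = foxJacobian (fun i U ↦ dX i (ι U)) (e ∘ FreeGroup.of) :=
    Matrix.ext hdYdX
  have hJXY : dXdY = foxJacobian (fun i U ↦ dY i (ι U)) FreeGroup.of :=
    Matrix.ext hdXdY
  rw [hJYX, hJXY]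
  exact ⟨foxJacobian_mul_foxJacobian hX hXprod hYprod hXbasis hYbasis,
    foxJacobian_mul_foxJacobian hY hYprod hXprod hYbasis hXbasis⟩
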